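/- arXiv:0806.4681 — 4 statements merged into one kernel-verified Lean document; each statement's English description precedes it below -/
import Mathlib

section
/- Let [a,b] ⊂ (−1,1) and ξ a point of the open unit disk 𝔻. Define g(ξ,t) := Arg(t−ξ) − 2·Arg(t − 1/ξ̄) for t ∈ [a,b] (where the second term is omitted if ξ = 0, and Arg denotes the principal branch of the argument with Arg(0) := π). Then the total variation of g(ξ,·) on [a,b] is at most the angle ∠(ξ,[a,b]) := |Arg(a−ξ) − Arg(b−ξ)| under which [a,b] is seen from ξ. -/
open Set

/-- Principal argument with the convention `Arg 0 = π`. -/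
noncomputable def arg' (z : ℂ) : ℝ := if z = 0 then Real.pi else Complex.arg z

/-- Angle under which the real interval `[a,b]` is seen from `ξ`. -/
noncomputable def ang (ξ : ℂ) (a b : ℝ) : ℝ := |arg' ((a : ℂ) - ξ) - arg' ((b : ℂ) - ξ)|

/-- `g(ξ,t) = Arg(t-ξ) - 2 Arg(t - 1/ξ̄)`, the second term being omitted when `ξ = 0`. -/
noncomputable def gfun (ξ : ℂ) (t : ℝ) : ℝ :=
  if ξ = 0 then arg' ((t : ℂ) - ξ)
  else arg' ((t : ℂ) - ξ) - 2 * arg' ((t : ℂ) - 1 / (starRingEnd ℂ ξ))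

/-!
Write `φ t = Arg (t - ξ)`, `ψ t = Arg (t - 1/ξ̄)`, so `g = φ - 2ψ`. If `Im ξ ≠ 0` both are smooth,
with `φ' = Im ξ / |t - ξ|²` and `ψ' = Im ξ / |ξ̄ t - 1|²`. Since
`|ξ̄ t - 1|² - |t - ξ|² = (1 - t²)(1 - |ξ|²) ≥ 0` on `[-1, 1]`, the derivatives `ψ'`, `φ' - ψ'`
and `φ'` share the sign `σ` of `Im ξ`, whence `|g'| = |(φ' - ψ') - ψ'| ≤ σ φ'`. So every increment
of `g` is dominated by the corresponding increment of the monotone function `σ φ`, whose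
variation on `[a, b]` is the angle. If `ξ` is real, `1/ξ̄` lies outside `[-1, 1]`, so `ψ` is
constant there and `g` is, up to a constant, the monotone step function `φ`.
-/

open Complex ComplexConjugate

lemma eVariationOn_le_of_edist_le {α E F : Type*} [LinearOrder α] [PseudoEMetricSpace E]
    [PseudoEMetricSpace F] {f : α → E} {g : α → F} {s : Set α}
    (h : ∀ x ∈ s, ∀ y ∈ s, edist (g x) (g y) ≤ edist (f x) (f y)) :
    eVariationOn g s ≤ eVariationOn f s := by
  refine iSup_le fun ⟨n, u, hu, us⟩ => ?_
  calc ∑ i ∈ Finset.range n, edist (g (u (i + 1))) (g (u i))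
      ≤ ∑ i ∈ Finset.range n, edist (f (u (i + 1))) (f (u i)) :=
        Finset.sum_le_sum fun i _ => h _ (us _) _ (us _)
    _ ≤ eVariationOn f s := eVariationOn.sum_le hu us

lemma eVariationOn_Icc_le_of_abs_sub_le {f g : ℝ → ℝ} {a b : ℝ} (hab : a ≤ b)
    (h : ∀ x ∈ Icc a b, ∀ y ∈ Icc a b, x ≤ y → |g y - g x| ≤ f y - f x) :
    eVariationOn g (Icc a b) ≤ ENNReal.ofReal (f b - f a) := by
  have hf : MonotoneOn f (Icc a b) := fun x hx y hy hxy =>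
    sub_nonneg.1 ((abs_nonneg _).trans (h x hx y hy hxy))
  have hvar := hf.eVariationOn_eq (left_mem_Icc.2 hab) (right_mem_Icc.2 hab)
  rw [inter_self] at hvar
  rw [← hvar]
  refine eVariationOn_le_of_edist_le fun x hx y hy => ?_
  simp only [edist_dist, Real.dist_eq]
  refine ENNReal.ofReal_le_ofReal ?_
  rcases le_total x y with hxy | hyx
  · rw [abs_sub_comm, abs_sub_comm (f x)]
    exact (h x hx y hy hxy).trans (le_abs_self _)
  · exact (h y hy x hx hyx).trans (le_abs_self _)

lemma hasDerivAt_arg_ofReal_sub {w : ℂ} (hw : w.im ≠ 0) (t : ℝ) :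
    HasDerivAt (fun t : ℝ => arg (t - w)) (w.im / normSq (t - w)) t := by
  have hslit : (t : ℂ) - w ∈ slitPlane := mem_slitPlane_iff.2 (Or.inr (by simpa using hw))
  have hlog := (((hasDerivAt_id t).ofReal_comp).sub_const w).clog_real hslit
  have him := imCLM.hasFDerivAt.comp_hasDerivAt t hlog
  simpa [Function.comp_def, log_im, div_im] using him

lemma monotone_mul_arg_ofReal_sub {w : ℂ} (hw : w.im ≠ 0) {σ : ℝ} (hσ : 0 ≤ σ * w.im) :
    Monotone fun t : ℝ => σ * arg (t - w) := by
  have hderiv t := (hasDerivAt_arg_ofReal_sub hw t).const_mul σ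
  refine monotone_of_deriv_nonneg (fun t => (hderiv t).differentiableAt) fun t => ?_
  rw [(hderiv t).deriv, ← mul_div_assoc]
  exact div_nonneg hσ (normSq_nonneg _)

lemma normSq_conj_mul_ofReal_sub_one_sub_normSq (ξ : ℂ) (t : ℝ) :
    normSq (conj ξ * t - 1) - normSq (t - ξ) = (1 - t ^ 2) * (1 - normSq ξ) := by
  simp only [normSq_apply, sub_re, mul_re, conj_re, ofReal_re, conj_im, ofReal_im, mul_zero,
    sub_zero, one_re, sub_im, mul_im, neg_mul, zero_add, one_im, mul_neg, neg_neg, zero_sub]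
  ring

lemma im_one_div_conj (ξ : ℂ) : (1 / conj ξ).im = ξ.im / normSq ξ := by
  simp [inv_im]

lemma im_one_div_conj_div_normSq (ξ : ℂ) (t : ℝ) :
    (1 / conj ξ).im / normSq (t - 1 / conj ξ) = ξ.im / normSq (conj ξ * t - 1) := by
  rcases eq_or_ne ξ 0 with rfl | hξ
  · simp
  have hmul : normSq (conj ξ * t - 1) = normSq ξ * normSq (t - 1 / conj ξ) := by
    rw [← normSq_conj ξ, ← normSq_mul, mul_sub, mul_one_div_cancel ((map_ne_zero _).2 hξ)]
  rw [hmul, im_one_div_conj, div_div]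

lemma ne_zero_of_im_ne_zero {z : ℂ} (hz : z.im ≠ 0) : z ≠ 0 := by
  rintro rfl
  exact hz zero_im

lemma im_one_div_conj_ne_zero {ξ : ℂ} (hi : ξ.im ≠ 0) : (1 / conj ξ).im ≠ 0 := by
  rw [im_one_div_conj]
  exact div_ne_zero hi (normSq_pos.2 (ne_zero_of_im_ne_zero hi)).ne'

lemma monotoneOn_mul_arg_sub_arg_sub_one_div_conj {ξ : ℂ} (hξ : ‖ξ‖ ≤ 1) (hi : ξ.im ≠ 0)
    {σ : ℝ} (hσ : 0 ≤ σ * ξ.im) :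
    MonotoneOn (fun t : ℝ => σ * (arg (t - ξ) - arg (t - 1 / conj ξ))) (Icc (-1) 1) := by
  have hderiv (t : ℝ) : HasDerivAt (fun t : ℝ => σ * (arg (t - ξ) - arg (t - 1 / conj ξ)))
      (σ * (ξ.im / normSq (t - ξ) - (1 / conj ξ).im / normSq (t - 1 / conj ξ))) t :=
    ((hasDerivAt_arg_ofReal_sub hi t).sub
      (hasDerivAt_arg_ofReal_sub (im_one_div_conj_ne_zero hi) t)).const_mul σ
  have hdiff : Differentiable ℝ fun t : ℝ => σ * (arg (t - ξ) - arg (t - 1 / conj ξ)) :=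
    fun t => (hderiv t).differentiableAt
  refine monotoneOn_of_deriv_nonneg (convex_Icc _ _) hdiff.continuous.continuousOn
    hdiff.differentiableOn fun t ht => ?_
  rw [interior_Icc] at ht
  have hpos : 0 < normSq (t - ξ) := normSq_pos.2 (ne_zero_of_im_ne_zero (by simpa using hi))
  have hle : normSq (t - ξ) ≤ normSq (conj ξ * t - 1) := by
    have hξ2 : normSq ξ ≤ 1 := by
      rw [normSq_eq_norm_sq]
      nlinarith [norm_nonneg ξ]
    have ht2 : t ^ 2 ≤ 1 := by nlinarith [ht.1, ht.2]
    nlinarith [normSq_conj_mul_ofReal_sub_one_sub_normSq ξ t,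
      mul_nonneg (sub_nonneg.2 ht2) (sub_nonneg.2 hξ2)]
  rw [(hderiv t).deriv, im_one_div_conj_div_normSq,
    show ∀ A B : ℝ, σ * (ξ.im / A - ξ.im / B) = σ * ξ.im * (1 / A - 1 / B) by intros; ring]
  exact mul_nonneg hσ (sub_nonneg.2 (one_div_le_one_div_of_le hpos hle))

lemma arg'_eq_arg {z : ℂ} (hz : z.im ≠ 0) : arg' z = arg z :=
  if_neg (ne_zero_of_im_ne_zero hz)

lemma gfun_eq_of_im_ne_zero {ξ : ℂ} (hi : ξ.im ≠ 0) (t : ℝ) :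
    gfun ξ t = arg (t - ξ) - 2 * arg (t - 1 / conj ξ) := by
  rw [gfun, if_neg (ne_zero_of_im_ne_zero hi), arg'_eq_arg (by simpa using hi),
    arg'_eq_arg (by simpa using im_one_div_conj_ne_zero hi)]

lemma abs_gfun_sub_le {ξ : ℂ} (hξ : ‖ξ‖ ≤ 1) (hi : ξ.im ≠ 0) {σ : ℝ} (hσ1 : |σ| = 1)
    (hσ : 0 ≤ σ * ξ.im) {s t : ℝ} (hs : s ∈ Icc (-1) 1) (ht : t ∈ Icc (-1) 1) (hst : s ≤ t) :
    |gfun ξ t - gfun ξ s| ≤ σ * arg (t - ξ) - σ * arg (s - ξ) := by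
  have hσw : 0 ≤ σ * (1 / conj ξ).im := by
    rw [im_one_div_conj, ← mul_div_assoc]
    exact div_nonneg hσ (normSq_nonneg _)
  have hw := monotone_mul_arg_ofReal_sub (im_one_div_conj_ne_zero hi) hσw hst
  have hd := monotoneOn_mul_arg_sub_arg_sub_one_div_conj hξ hi hσ hs ht hst
  -- `σ g = σ (φ - ψ) - σ ψ` is a difference of two increasing functions whose sum is `σ φ`.
  rw [← one_mul |_|, ← hσ1, ← abs_mul, abs_le, gfun_eq_of_im_ne_zero hi,
    gfun_eq_of_im_ne_zero hi]
  simp only at hw hd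
  constructor <;> linarith

lemma arg'_ofReal_sub_ofReal (t c : ℝ) : arg' ((t : ℂ) - c) = if t ≤ c then Real.pi else 0 := by
  rw [← ofReal_sub, arg']
  rcases lt_trichotomy t c with h | rfl | h
  · rw [if_neg (by exact_mod_cast (sub_neg.2 h).ne), arg_ofReal_of_neg (sub_neg.2 h),
      if_pos h.le]
  · simp
  · rw [if_neg (by exact_mod_cast (sub_pos.2 h).ne'), arg_ofReal_of_nonneg (sub_pos.2 h).le,
      if_neg h.not_ge]

lemma antitone_arg'_ofReal_sub_ofReal (c : ℝ) : Antitone fun t : ℝ => arg' ((t : ℂ) - c) := by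
  intro s t hst
  simp only [arg'_ofReal_sub_ofReal]
  split_ifs <;> first | exact le_rfl | exact Real.pi_pos.le | linarith

lemma gfun_ofReal_sub_gfun_ofReal {c : ℝ} (hc : |c| < 1) {s t : ℝ} (hs : s ∈ Icc (-1) 1)
    (ht : t ∈ Icc (-1) 1) :
    gfun c t - gfun c s = arg' ((t : ℂ) - c) - arg' ((s : ℂ) - c) := by
  rcases eq_or_ne c 0 with rfl | hc0
  · simp [gfun]
  have hinv : 1 / conj (c : ℂ) = ((1 / c : ℝ) : ℂ) := by simp
  have hside : (t ≤ 1 / c ↔ s ≤ 1 / c) := by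
    rcases abs_lt.1 hc with ⟨hc1, hc2⟩
    rcases lt_or_gt_of_ne hc0 with hneg | hpos
    · have : 1 / c < -1 := by rw [div_lt_iff_of_neg hneg]; linarith
      constructor <;> intro <;> linarith [hs.1, ht.1]
    · have : 1 < 1 / c := by rw [lt_div_iff₀ hpos]; linarith
      constructor <;> intro <;> linarith [hs.2, ht.2]
  simp only [gfun, ofReal_eq_zero, if_neg hc0, hinv, arg'_ofReal_sub_ofReal (c := 1 / c),
    hside]
  ring

lemma eVariationOn_gfun_le_of_im_eq_zero {a b : ℝ} {ξ : ℂ} (ha : -1 ≤ a) (hab : a ≤ b)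
    (hb : b ≤ 1) (hξ : ‖ξ‖ < 1) (hi : ξ.im = 0) :
    eVariationOn (gfun ξ) (Icc a b) ≤ ENNReal.ofReal (ang ξ a b) := by
  obtain ⟨c, rfl⟩ : ∃ c : ℝ, (c : ℂ) = ξ := ⟨ξ.re, ext rfl hi.symm⟩
  have hc : |c| < 1 := by simpa using hξ
  have hsub : Icc a b ⊆ Icc (-1) 1 := Icc_subset_Icc ha hb
  refine (eVariationOn_Icc_le_of_abs_sub_le (f := fun t => -arg' ((t : ℂ) - c)) hab
    fun s hs t ht hst => ?_).trans (ENNReal.ofReal_le_ofReal ?_)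
  · rw [gfun_ofReal_sub_gfun_ofReal hc (hsub hs) (hsub ht),
      abs_of_nonpos (sub_nonpos.2 (antitone_arg'_ofReal_sub_ofReal c hst))]
    linarith
  · rw [ang]
    linarith [le_abs_self (arg' ((a : ℂ) - c) - arg' ((b : ℂ) - c))]

lemma eVariationOn_gfun_le_of_im_ne_zero {a b : ℝ} {ξ : ℂ} (ha : -1 ≤ a) (hab : a ≤ b)
    (hb : b ≤ 1) (hξ : ‖ξ‖ ≤ 1) (hi : ξ.im ≠ 0) :
    eVariationOn (gfun ξ) (Icc a b) ≤ ENNReal.ofReal (ang ξ a b) := by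
  obtain ⟨σ, hσ1, hσ⟩ : ∃ σ : ℝ, |σ| = 1 ∧ 0 ≤ σ * ξ.im := by
    rcases le_total 0 ξ.im with h | h
    exacts [⟨1, abs_one, by simpa⟩, ⟨-1, by simp, by simpa⟩]
  have hsub : Icc a b ⊆ Icc (-1) 1 := Icc_subset_Icc ha hb
  refine (eVariationOn_Icc_le_of_abs_sub_le (f := fun t => σ * arg ((t : ℂ) - ξ)) hab
    fun s hs t ht hst => abs_gfun_sub_le hξ hi hσ1 hσ (hsub hs) (hsub ht) hst).trans
    (ENNReal.ofReal_le_ofReal ?_)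
  rw [ang, arg'_eq_arg (by simpa using hi), arg'_eq_arg (by simpa using hi)]
  calc σ * arg (b - ξ) - σ * arg (a - ξ) = σ * (arg (b - ξ) - arg (a - ξ)) := by ring
    _ ≤ |σ * (arg (b - ξ) - arg (a - ξ))| := le_abs_self _
    _ = |arg (a - ξ) - arg (b - ξ)| := by rw [abs_mul, hσ1, one_mul, abs_sub_comm]

/-- for `[a,b] ⊂ (-1,1)` and `ξ` in the open unit disk, the total variation
of `g(ξ,·)` on `[a,b]` is at most the angle `∠(ξ,[a,b])`. -/
theorem stmt1 (a b : ℝ) (ξ : ℂ) (h1 : -1 < a) (hab : a ≤ b) (h2 : b < 1) (hξ : ‖ξ‖ < 1) :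
    eVariationOn (gfun ξ) (Icc a b) ≤ ENNReal.ofReal (ang ξ a b) := by
  rcases eq_or_ne ξ.im 0 with hi | hi
  · exact eVariationOn_gfun_le_of_im_eq_zero h1.le hab h2.le hξ hi
  · exact eVariationOn_gfun_le_of_im_ne_zero h1.le hab h2.le hξ.le hi
end

section
/- For monotone Arg: if ξ ∈ ℂ and [a,b] ⊂ ℝ with ξ ∉ [a,b], then the function t ↦ Arg(t − ξ) is monotone on [a,b], and consequently its total variation on [a,b] equals ∠(ξ,[a,b]) = |Arg(a−ξ) − Arg(b−ξ)|. -/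
/-!
Along a horizontal line `Im z = c ≠ 0` the argument is `±π/2 - arctan (Re z / c)`, hence monotone
in `Re z`; along the real axis it steps down from `π` to `0`. Off `ξ`, `arg'` agrees with `arg`, and
the variation of a monotone function on `[a, b]` is `|f a - f b|`.
-/

open Set

open Real

namespace Complex

theorem arg_eq_pi_div_two_sub_arctan {z : ℂ} (hz : 0 < z.im) :
    z.arg = π / 2 - Real.arctan (z.re / z.im) := by
  have h₀ : 0 < z.arg := (arg_nonneg_iff.2 hz.le).lt_of_ne' fun h ↦ by
    simp [arg_eq_zero_iff, hz.ne'] at h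
  have h₁ : z.arg < π := arg_lt_pi_iff.2 (Or.inr hz.ne')
  rw [← inv_div z.im z.re, ← tan_arg, ← Real.tan_pi_div_two_sub, Real.arctan_tan] <;>
    linarith

theorem arg_eq_neg_pi_div_two_sub_arctan {z : ℂ} (hz : z.im < 0) :
    z.arg = -(π / 2) - Real.arctan (z.re / z.im) := by
  have h := arg_eq_pi_div_two_sub_arctan (z := -z) (by simpa using hz)
  rw [arg_neg_eq_arg_add_pi_of_im_neg hz, neg_re, neg_im, neg_div_neg_eq] at h
  linarith

theorem antitone_arg_ofReal : Antitone fun x : ℝ => (x : ℂ).arg := by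
  intro x y hxy
  rcases lt_or_ge x 0 with hx | hx
  · simp only [arg_ofReal_of_neg hx]; exact arg_le_pi _
  · simp only [arg_ofReal_of_nonneg hx, arg_ofReal_of_nonneg (hx.trans hxy), le_refl]

theorem antitone_arg_ofReal_sub_of_im_nonpos {ξ : ℂ} (hξ : ξ.im ≤ 0) :
    Antitone fun t : ℝ => ((t : ℂ) - ξ).arg := by
  rcases hξ.lt_or_eq with hξ | hξ
  · have h : ∀ t : ℝ, ((t : ℂ) - ξ).arg = π / 2 - Real.arctan ((t - ξ.re) / -ξ.im) := fun t ↦ by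
      rw [arg_eq_pi_div_two_sub_arctan (by simpa using hξ)]; simp
    simp only [h]
    exact fun x y hxy ↦ sub_le_sub_left (Real.arctan_mono (by gcongr; linarith)) _
  · have h : ∀ t : ℝ, (t : ℂ) - ξ = ((t - ξ.re : ℝ) : ℂ) := fun t ↦ by
      apply ext <;> simp [hξ]
    simp only [h]
    exact antitone_arg_ofReal.comp_monotone fun x y hxy ↦ by simpa using hxy

theorem monotone_arg_ofReal_sub_of_im_pos {ξ : ℂ} (hξ : 0 < ξ.im) :
    Monotone fun t : ℝ => ((t : ℂ) - ξ).arg := by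
  have h : ∀ t : ℝ, ((t : ℂ) - ξ).arg = -(π / 2) - Real.arctan ((t - ξ.re) / -ξ.im) := fun t ↦ by
    rw [arg_eq_neg_pi_div_two_sub_arctan (by simpa using hξ)]; simp
  simp only [h]
  exact fun x y hxy ↦ sub_le_sub_left
    (Real.arctan_mono (div_le_div_of_nonpos_of_le (by linarith) (by linarith))) _

end Complex

theorem eVariationOn_neg {α E : Type*} [LinearOrder α] [SeminormedAddCommGroup E] (f : α → E)
    (s : Set α) : eVariationOn (-f) s = eVariationOn f s := by
  simp only [eVariationOn, Pi.neg_apply, edist_neg_neg]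

theorem AntitoneOn.eVariationOn_eq {α : Type*} [LinearOrder α] {f : α → ℝ} {s : Set α} {a b : α}
    (hf : AntitoneOn f s) (as : a ∈ s) (bs : b ∈ s) :
    eVariationOn f (s ∩ Icc a b) = .ofReal (f a - f b) := by
  rw [← eVariationOn_neg, ← neg_sub_neg]
  exact hf.neg.eVariationOn_eq as bs

theorem eVariationOn_Icc_eq_abs_sub {f : ℝ → ℝ} {a b : ℝ} (hab : a ≤ b)
    (hf : MonotoneOn f (Icc a b) ∨ AntitoneOn f (Icc a b)) :
    eVariationOn f (Icc a b) = .ofReal |f a - f b| := by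
  have ha : a ∈ Icc a b := left_mem_Icc.2 hab
  have hb : b ∈ Icc a b := right_mem_Icc.2 hab
  rw [← inter_self (Icc a b)]
  rcases hf with hf | hf
  · rw [hf.eVariationOn_eq ha hb, abs_sub_comm, abs_of_nonneg (sub_nonneg.2 (hf ha hb hab))]
  · rw [hf.eVariationOn_eq ha hb, abs_of_nonneg (sub_nonneg.2 (hf ha hb hab))]

/-- if `ξ ∉ [a,b]`, then `t ↦ Arg(t-ξ)` is monotone on `[a,b]` and its
total variation on `[a,b]` equals the angle `∠(ξ,[a,b])`. -/
theorem stmt3 (a b : ℝ) (hab : a ≤ b) (ξ : ℂ)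
    (hξ : ¬ ∃ x : ℝ, x ∈ Icc a b ∧ ξ = (x : ℂ)) :
    (MonotoneOn (fun t : ℝ => arg' ((t : ℂ) - ξ)) (Icc a b) ∨
      AntitoneOn (fun t : ℝ => arg' ((t : ℂ) - ξ)) (Icc a b)) ∧
    eVariationOn (fun t : ℝ => arg' ((t : ℂ) - ξ)) (Icc a b) = ENNReal.ofReal (ang ξ a b) := by
  have h_arg :
      EqOn (fun t : ℝ => ((t : ℂ) - ξ).arg) (fun t : ℝ => arg' ((t : ℂ) - ξ)) (Icc a b) :=
    fun t ht ↦ (if_neg fun h ↦ hξ ⟨t, ht, (sub_eq_zero.1 h).symm⟩).symm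
  have h_mono : MonotoneOn (fun t : ℝ => arg' ((t : ℂ) - ξ)) (Icc a b) ∨
      AntitoneOn (fun t : ℝ => arg' ((t : ℂ) - ξ)) (Icc a b) := by
    rcases le_or_gt ξ.im 0 with him | him
    · exact .inr (((Complex.antitone_arg_ofReal_sub_of_im_nonpos him).antitoneOn _).congr h_arg)
    · exact .inl (((Complex.monotone_arg_ofReal_sub_of_im_pos him).monotoneOn _).congr h_arg)
  exact ⟨h_mono, eVariationOn_Icc_eq_abs_sub hab h_mono⟩
end

section
/- Subadditivity of principal argument: for any complex numbers ξ₁, ξ₂ with ξ₁ + ξ₂ ≠ 0, one has |Arg(ξ₁ + ξ₂)| ≤ |Arg(ξ₁)| + |Arg(ξ₂)| (with the convention Arg(0) = π). -/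
open InnerProductGeometry

namespace InnerProductGeometry

variable {V : Type*} [NormedAddCommGroup V] [InnerProductSpace ℝ V]

theorem angle_add_le_angle_add_angle (u x y : V) :
    angle u (x + y) ≤ angle u x + angle u y := by
  rcases eq_or_ne y 0 with rfl | hy
  · simpa using angle_nonneg u 0
  have hsplit : angle x y = angle x (x + y) + angle y (x + y) :=
    angle_eq_angle_add_add_angle_add x hy
  have hvia_x := angle_le_angle_add_angle u x (x + y)
  have hvia_y := angle_le_angle_add_angle u y (x + y)
  have hxy := angle_le_angle_add_angle x u y
  rw [angle_comm x u] at hxy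
  linarith

end InnerProductGeometry

theorem abs_arg'_eq_angle_one {z : ℂ} (hz : z ≠ 0) : |arg' z| = angle 1 z := by
  rw [arg', if_neg hz, Complex.angle_one_left hz]

theorem angle_one_le_abs_arg' (z : ℂ) : angle 1 z ≤ |arg' z| := by
  rcases eq_or_ne z 0 with rfl | hz
  · simp [arg', abs_of_pos Real.pi_pos, Real.pi_pos.le]
  · exact (abs_arg'_eq_angle_one hz).ge

/-- subadditivity of the principal argument:
`|Arg(ξ₁+ξ₂)| ≤ |Arg ξ₁| + |Arg ξ₂|` whenever `ξ₁ + ξ₂ ≠ 0`. -/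
theorem stmt4 (ξ₁ ξ₂ : ℂ) (h : ξ₁ + ξ₂ ≠ 0) :
    |arg' (ξ₁ + ξ₂)| ≤ |arg' ξ₁| + |arg' ξ₂| :=
  calc |arg' (ξ₁ + ξ₂)| = angle 1 (ξ₁ + ξ₂) := abs_arg'_eq_angle_one h
    _ ≤ angle 1 ξ₁ + angle 1 ξ₂ := angle_add_le_angle_add_angle 1 ξ₁ ξ₂
    _ ≤ |arg' ξ₁| + |arg' ξ₂| := add_le_add (angle_one_le_abs_arg' ξ₁) (angle_one_le_abs_arg' ξ₂)
end

section
/- Let I = [a,b] ⊂ (0,1), and let {q_n} be a sequence of polynomials of degree m_n whose roots ξ_{1,n},…,ξ_{m_n,n} all lie in the open unit disk and satisfy ∑_{j=1}^{m_n} (π − ∠(ξ_{j,n}, I)) ≤ C with C independent of n. Then for every ε > 0 there exists an integer l such that, for all n large enough, there is a polynomial T_{l,n} of degree at most l with |q̃_n(x)/|q̃_n(x)| − T_{l,n}(x)| < ε for all x ∈ I, where q̃_n(z) := z^{m_n} · conj(q_n(1/z̄)) is the reciprocal polynomial of q_n. -/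
open Set

/-- Reciprocal polynomial `q̃(z) = z^{deg q} conj(q(1/z̄))`, as a function. -/
noncomputable def recipPoly (q : Polynomial ℂ) (z : ℂ) : ℂ :=
  z ^ q.natDegree * (starRingEnd ℂ) (Polynomial.eval (1 / (starRingEnd ℂ) z) q)

/-!
On the real axis `q̃(x) = conj(lc q) · ∏ⱼ (1 - conj ξⱼ · x)`, so `q̃/|q̃|` is a product of
unimodular factors. For `x, y ∈ [0, b]` the factors `1 - conj ξ · x` and `1 - conj ξ · y` lie
in a common half plane and `Im ((1 - conj ξ x) · conj (1 - conj ξ y)) = (x - y) Im ξ`, so each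
normalized factor is `2 |Im ξ| / (1 - b)²`-Lipschitz. Since a zero in the unit disk sees `I`
under an angle at most `π - |Im ξ| / 2`, the hypothesis gives `∑ⱼ |Im ξⱼ| ≤ 2C`: the functions
`q̃ₙ/|q̃ₙ|` are uniformly Lipschitz on `I`. A `K`-Lipschitz function is approximated by its
Bernstein polynomial of degree `M` within `K / (2√M)`, uniformly in the function.
-/

open scoped Polynomial ComplexConjugate NNReal

theorem arg'_mem_Icc_of_im_nonneg {w : ℂ} (hw : 0 ≤ w.im) (h2 : ‖w‖ ≤ 2) :
    arg' w ∈ Icc 0 (Real.pi - w.im / 2) := by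
  by_cases h0 : w = 0
  · simp [arg', h0, Real.pi_nonneg]
  rw [arg', if_neg h0]
  refine ⟨Complex.arg_nonneg_iff.2 hw, ?_⟩
  -- `sin (π - arg w) = im w / ‖w‖ ≥ im w / 2`, and `sin θ ≤ θ` for `θ ≥ 0`.
  have hsin : w.im / 2 ≤ Real.sin (Real.pi - w.arg) := by
    rw [Real.sin_pi_sub, Complex.sin_arg]
    exact div_le_div_of_nonneg_left hw (norm_pos_iff.2 h0) h2
  linarith [Real.sin_le (sub_nonneg.2 (Complex.arg_le_pi w))]

theorem arg'_conj_of_im_ne_zero {w : ℂ} (hw : w.im ≠ 0) : arg' (conj w) = -arg' w := by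
  have hw0 : w ≠ 0 := fun h => hw (by simp [h])
  have hpi : w.arg ≠ Real.pi := fun h => hw (Complex.arg_eq_pi_iff.1 h).2
  rw [arg', arg', if_neg hw0, if_neg ((map_ne_zero _).2 hw0), Complex.arg_conj, if_neg hpi]

theorem ang_conj (ξ : ℂ) (a b : ℝ) : ang (conj ξ) a b = ang ξ a b := by
  by_cases hξ : ξ.im = 0
  · rw [Complex.conj_eq_iff_im.2 hξ]
  have him : ∀ c : ℝ, ((c : ℂ) - ξ).im ≠ 0 := fun c => by simpa using hξ
  have hconj : ∀ c : ℝ, (c : ℂ) - conj ξ = conj ((c : ℂ) - ξ) := fun c => by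
    rw [map_sub, Complex.conj_ofReal]
  rw [ang, ang, hconj, hconj, arg'_conj_of_im_ne_zero (him a), arg'_conj_of_im_ne_zero (him b),
    ← abs_neg]
  ring_nf

theorem ang_le_pi_sub_abs_im_div_two {ξ : ℂ} (hξ : ‖ξ‖ ≤ 1) {a b : ℝ} (ha : |a| ≤ 1)
    (hb : |b| ≤ 1) : ang ξ a b ≤ Real.pi - |ξ.im| / 2 := by
  wlog him : ξ.im ≤ 0 generalizing ξ
  · simpa [ang_conj] using this (ξ := conj ξ) (by simpa using hξ)
      (by rw [Complex.conj_im]; linarith [not_le.1 him])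
  have hmem : ∀ c : ℝ, |c| ≤ 1 → arg' ((c : ℂ) - ξ) ∈ Icc 0 (Real.pi - |ξ.im| / 2) := by
    intro c hc
    have h2 : ‖(c : ℂ) - ξ‖ ≤ 2 := by
      calc ‖(c : ℂ) - ξ‖ ≤ ‖(c : ℂ)‖ + ‖ξ‖ := norm_sub_le _ _
        _ ≤ 2 := by rw [Complex.norm_real, Real.norm_eq_abs]; linarith
    simpa [abs_of_nonpos him] using arg'_mem_Icc_of_im_nonneg (by simpa using him) h2
  obtain ⟨ha0, ha1⟩ := hmem a ha
  obtain ⟨hb0, hb1⟩ := hmem b hb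
  exact abs_sub_le_iff.2 ⟨by linarith, by linarith⟩

noncomputable def phase (z : ℂ) : ℂ := z / (‖z‖ : ℂ)

theorem norm_phase_le_one (z : ℂ) : ‖phase z‖ ≤ 1 := by
  rw [phase, norm_div, Complex.norm_real, norm_norm]
  exact div_self_le_one _

theorem phase_mul (z w : ℂ) : phase (z * w) = phase z * phase w := by
  simp only [phase, norm_mul, Complex.ofReal_mul, mul_div_mul_comm]

theorem phase_multiset_prod (s : Multiset ℂ) : phase s.prod = (s.map phase).prod := by
  induction s using Multiset.induction_on with
  | empty => simp [phase]
  | cons a s ih => simp [phase_mul, ih]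

theorem norm_sub_le_two_mul_abs_im_mul_conj {U V : ℂ} (hU : ‖U‖ = 1) (hV : ‖V‖ = 1)
    (hre : 0 ≤ (U * conj V).re) : ‖U - V‖ ≤ 2 * |(U * conj V).im| := by
  have hW : (U * conj V).re ^ 2 + (U * conj V).im ^ 2 = 1 := by
    have h : ‖U * conj V‖ ^ 2 = 1 := by rw [norm_mul, Complex.norm_conj, hU, hV]; norm_num
    rw [Complex.sq_norm, Complex.normSq_apply] at h
    linear_combination h
  have hsub : ‖U - V‖ ^ 2 = 2 - 2 * (U * conj V).re := by
    rw [Complex.sq_norm, Complex.normSq_sub, ← Complex.sq_norm, ← Complex.sq_norm, hU, hV]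
    ring
  refine (pow_le_pow_iff_left₀ (norm_nonneg _) (by positivity) two_ne_zero).1 ?_
  nlinarith [sq_abs (U * conj V).im]

theorem norm_phase_sub_phase_le {u v : ℂ} (hu : u ≠ 0) (hv : v ≠ 0) (hre : 0 ≤ (u * conj v).re) :
    ‖phase u - phase v‖ ≤ 2 * |(u * conj v).im| / (‖u‖ * ‖v‖) := by
  have hnorm : ∀ {z : ℂ}, z ≠ 0 → ‖phase z‖ = 1 := fun hz => by
    rw [phase, norm_div, Complex.norm_real, norm_norm, div_self (norm_ne_zero_iff.2 hz)]
  have hprod : phase u * conj (phase v) = u * conj v / ((‖u‖ * ‖v‖ : ℝ) : ℂ) := by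
    rw [phase, phase, map_div₀, Complex.conj_ofReal, Complex.ofReal_mul, mul_div_mul_comm]
  have key := norm_sub_le_two_mul_abs_im_mul_conj (hnorm hu) (hnorm hv)
    (by rw [hprod, Complex.div_ofReal_re]; positivity)
  rwa [hprod, Complex.div_ofReal_im, abs_div,
    abs_of_pos (mul_pos (norm_pos_iff.2 hu) (norm_pos_iff.2 hv)), ← mul_div_assoc] at key

theorem norm_multiset_prod_map_sub_prod_map_le {R ι : Type*} [SeminormedCommRing R]
    [NormOneClass R] (s : Multiset ι) {f g : ι → R} (hf : ∀ i ∈ s, ‖f i‖ ≤ 1)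
    (hg : ∀ i ∈ s, ‖g i‖ ≤ 1) :
    ‖(s.map f).prod - (s.map g).prod‖ ≤ (s.map fun i => ‖f i - g i‖).sum := by
  induction s using Multiset.induction_on with
  | empty => simp
  | cons a s ih =>
    simp only [Multiset.forall_mem_cons] at hf hg
    have hprod : ‖(s.map f).prod‖ ≤ 1 := by
      refine Multiset.prod_induction (‖·‖ ≤ 1) _ (fun x y hx hy => ?_) norm_one.le ?_
      · exact (norm_mul_le x y).trans (mul_le_one₀ hx (norm_nonneg y) hy)
      · simpa using hf.2
    simp only [Multiset.map_cons, Multiset.prod_cons, Multiset.sum_cons]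
    calc ‖f a * (s.map f).prod - g a * (s.map g).prod‖
        = ‖(f a - g a) * (s.map f).prod + g a * ((s.map f).prod - (s.map g).prod)‖ := by ring_nf
      _ ≤ ‖f a - g a‖ * 1 + 1 * (s.map fun i => ‖f i - g i‖).sum := by
        refine (norm_add_le _ _).trans (add_le_add ?_ ?_) <;> refine (norm_mul_le _ _).trans ?_
        · gcongr
        · gcongr
          · exact hg.1
          · exact ih hf.2 hg.2
      _ = _ := by ring

theorem recipPoly_eq_mul_prod (q : ℂ[X]) {z : ℂ} (hz : z ≠ 0) :
    recipPoly q z = conj q.leadingCoeff * (q.roots.map fun ξ => 1 - conj ξ * z).prod := by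
  have hq := Polynomial.C_leadingCoeff_mul_prod_multiset_X_sub_C
    (IsAlgClosed.card_roots_eq_natDegree (p := q))
  have hpow : z ^ q.natDegree = (q.roots.map fun _ => z).prod := by
    rw [Multiset.map_const', Multiset.prod_replicate, IsAlgClosed.card_roots_eq_natDegree]
  have heval :
      q.eval (1 / conj z) = q.leadingCoeff * (q.roots.map fun ξ => 1 / conj z - ξ).prod := by
    conv_lhs => rw [← hq]
    simp [Polynomial.eval_multiset_prod]
  rw [recipPoly, hpow, heval, map_mul, mul_left_comm, map_multiset_prod, Multiset.map_map,
    ← Multiset.prod_map_mul]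
  congr 2
  refine Multiset.map_congr rfl fun ξ _ => ?_
  simp only [Function.comp_apply, map_sub, map_div₀, map_one, Complex.conj_conj]
  field_simp

theorem phase_recipPoly (q : ℂ[X]) {z : ℂ} (hz : z ≠ 0) :
    phase (recipPoly q z) =
      phase (conj q.leadingCoeff) * (q.roots.map fun ξ => phase (1 - conj ξ * z)).prod := by
  rw [recipPoly_eq_mul_prod q hz, phase_mul, phase_multiset_prod, Multiset.map_map]
  rfl

theorem norm_phase_one_sub_conj_mul_sub_le {ξ : ℂ} (hξ : ‖ξ‖ ≤ 1) {b : ℝ} (hb : b < 1) {x y : ℝ}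
    (hx : x ∈ Icc 0 b) (hy : y ∈ Icc 0 b) :
    ‖phase (1 - conj ξ * x) - phase (1 - conj ξ * y)‖ ≤ 2 * |ξ.im| / (1 - b) ^ 2 * |x - y| := by
  have hlower : ∀ t ∈ Icc 0 b, 1 - b ≤ ‖1 - conj ξ * t‖ := fun t ht => by
    have : ‖conj ξ * t‖ ≤ b := by
      rw [norm_mul, Complex.norm_conj, Complex.norm_real, Real.norm_of_nonneg ht.1]
      nlinarith [norm_nonneg ξ, ht.1, ht.2]
    calc 1 - b ≤ ‖(1 : ℂ)‖ - ‖conj ξ * t‖ := by rw [norm_one]; linarith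
      _ ≤ _ := norm_sub_norm_le _ _
  have hu := hlower x hx
  have hv := hlower y hy
  obtain ⟨hre_eq, him⟩ : ((1 - conj ξ * x) * conj (1 - conj ξ * y)).re =
        1 - (x + y) * ξ.re + (ξ.re ^ 2 + ξ.im ^ 2) * (x * y) ∧
      ((1 - conj ξ * x) * conj (1 - conj ξ * y)).im = (x - y) * ξ.im := by
    simp only [map_sub, map_one, map_mul, Complex.conj_conj, Complex.conj_ofReal, Complex.mul_re,
      Complex.mul_im, Complex.sub_re, Complex.sub_im, Complex.one_re, Complex.one_im,
      Complex.conj_re, Complex.conj_im, Complex.ofReal_re, Complex.ofReal_im]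
    constructor <;> ring
  -- `re = (1 - x‖ξ‖)(1 - y‖ξ‖) + (x + y)(‖ξ‖ - re ξ) ≥ 0`.
  have hre : 0 ≤ ((1 - conj ξ * x) * conj (1 - conj ξ * y)).re := by
    have hnorm : ‖ξ‖ ^ 2 = ξ.re ^ 2 + ξ.im ^ 2 := by
      rw [Complex.sq_norm, Complex.normSq_apply]; ring
    rw [hre_eq, ← hnorm]
    nlinarith [mul_nonneg (sub_nonneg.2 (mul_le_one₀ hξ hx.1 (by linarith [hx.2])))
      (sub_nonneg.2 (mul_le_one₀ hξ hy.1 (by linarith [hy.2]))),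
      mul_nonneg (add_nonneg hx.1 hy.1) (sub_nonneg.2 (Complex.re_le_norm ξ))]
  have h1b : 0 < 1 - b := by linarith
  calc _ ≤ 2 * |(x - y) * ξ.im| / (‖1 - conj ξ * x‖ * ‖1 - conj ξ * y‖) := by
        rw [← him]
        exact norm_phase_sub_phase_le (norm_pos_iff.1 (h1b.trans_le hu))
          (norm_pos_iff.1 (h1b.trans_le hv)) hre
    _ ≤ 2 * |(x - y) * ξ.im| / ((1 - b) * (1 - b)) := by gcongr
    _ = _ := by rw [abs_mul]; ring

theorem lipschitzOnWith_phase_recipPoly (q : ℂ[X]) (hroots : ∀ ξ ∈ q.roots, ‖ξ‖ ≤ 1) {b : ℝ}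
    (hb : b < 1) :
    LipschitzOnWith (2 * (q.roots.map fun ξ : ℂ => |ξ.im|).sum / (1 - b) ^ 2).toNNReal
      (fun x : ℝ => phase (recipPoly q x)) (Ioc 0 b) := by
  refine LipschitzOnWith.of_dist_le' fun x hx y hy => ?_
  have hmem : ∀ {t : ℝ}, t ∈ Ioc 0 b → t ∈ Icc 0 b := fun ht => ⟨ht.1.le, ht.2⟩
  rw [dist_eq_norm, Real.dist_eq, phase_recipPoly q (by exact_mod_cast hx.1.ne'),
    phase_recipPoly q (by exact_mod_cast hy.1.ne'), ← mul_sub, norm_mul]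
  calc _ ≤ 1 * (q.roots.map fun ξ =>
        ‖phase (1 - conj ξ * x) - phase (1 - conj ξ * y)‖).sum := by
        gcongr
        · exact norm_phase_le_one _
        · exact norm_multiset_prod_map_sub_prod_map_le _ (fun _ _ => norm_phase_le_one _)
            (fun _ _ => norm_phase_le_one _)
    _ ≤ (q.roots.map fun ξ => 2 / (1 - b) ^ 2 * |x - y| * |ξ.im|).sum := by
        rw [one_mul]
        refine Multiset.sum_map_le_sum_map _ _ fun ξ hξ => ?_
        refine (norm_phase_one_sub_conj_mul_sub_le (hroots ξ hξ) hb (hmem hx) (hmem hy)).trans_eq ?_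
        ring
    _ = _ := by rw [Multiset.sum_map_mul_left]; ring

theorem bernsteinPolynomial.eval_nonneg (n ν : ℕ) {t : ℝ} (ht : t ∈ Icc 0 1) :
    0 ≤ (bernsteinPolynomial ℝ n ν).eval t :=
  bernstein_nonneg (x := ⟨t, ht⟩)

theorem bernsteinPolynomial.sum_eval_mul_div_sub_sq (M : ℕ) (hM : 0 < M) (t : ℝ) :
    ∑ k ∈ Finset.range (M + 1), (bernsteinPolynomial ℝ M k).eval t * ((k : ℝ) / M - t) ^ 2 =
      t * (1 - t) / M := by
  have hvar := congrArg (Polynomial.eval t) (bernsteinPolynomial.variance (R := ℝ) M)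
  simp only [Polynomial.eval_finsetSum, Polynomial.eval_mul, Polynomial.eval_pow,
    Polynomial.eval_sub, Polynomial.eval_X, Polynomial.eval_natCast,
    Polynomial.eval_one, nsmul_eq_mul] at hvar
  have hM' : (M : ℝ) ≠ 0 := by positivity
  calc _ = (∑ k ∈ Finset.range (M + 1),
        ((M : ℝ) * t - k) ^ 2 * (bernsteinPolynomial ℝ M k).eval t) / (M : ℝ) ^ 2 := by
        rw [Finset.sum_div]
        refine Finset.sum_congr rfl fun k _ => ?_
        field_simp
        ring
    _ = t * (1 - t) / M := by
        rw [hvar]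
        field_simp

theorem LipschitzOnWith.norm_bernstein_sum_sub_le {E : Type*} [SeminormedAddCommGroup E]
    [NormedSpace ℝ E] {K : ℝ≥0} {f : ℝ → E} (hf : LipschitzOnWith K f (Icc 0 1)) {M : ℕ}
    (hM : 0 < M) {t : ℝ} (ht : t ∈ Icc 0 1) :
    ‖∑ k ∈ Finset.range (M + 1), (bernsteinPolynomial ℝ M k).eval t • f (k / M) - f t‖ ≤
      K / (2 * √M) := by
  set w : ℕ → ℝ := fun k => (bernsteinPolynomial ℝ M k).eval t
  have hw0 : ∀ k, 0 ≤ w k := fun k => bernsteinPolynomial.eval_nonneg M k ht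
  have hw1 : ∑ k ∈ Finset.range (M + 1), w k = 1 := by
    simp only [w, ← Polynomial.eval_finsetSum, bernsteinPolynomial.sum, Polynomial.eval_one]
  have hnode : ∀ k ∈ Finset.range (M + 1), (k : ℝ) / M ∈ Icc 0 1 := fun k hk =>
    ⟨by positivity, div_le_one_of_le₀ (by exact_mod_cast Finset.mem_range_succ_iff.1 hk)
      M.cast_nonneg⟩
  have hjensen : (∑ k ∈ Finset.range (M + 1), w k * |(k : ℝ) / M - t|) ^ 2 ≤
      t * (1 - t) / M := by
    rw [← bernsteinPolynomial.sum_eval_mul_div_sub_sq M hM t]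
    simpa [sq_abs] using
      even_two.convexOn_pow.map_sum_le (fun k _ => hw0 k) hw1 (fun k _ => mem_univ _)
        (p := fun k : ℕ => |(k : ℝ) / M - t|)
  have hmean : ∑ k ∈ Finset.range (M + 1), w k * |(k : ℝ) / M - t| ≤ 1 / (2 * √M) := by
    have hM' : (0 : ℝ) < M := by exact_mod_cast hM
    refine abs_le_of_sq_le_sq' ?_ (by positivity) |>.2
    rw [div_pow, mul_pow, Real.sq_sqrt hM'.le]
    refine hjensen.trans ?_
    rw [div_le_div_iff₀ hM' (by positivity)]
    nlinarith [sq_nonneg (2 * t - 1)]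
  calc ‖∑ k ∈ Finset.range (M + 1), w k • f (k / M) - f t‖
      = ‖∑ k ∈ Finset.range (M + 1), w k • (f (k / M) - f t)‖ := by
        simp only [smul_sub, Finset.sum_sub_distrib, ← Finset.sum_smul, hw1, one_smul]
    _ ≤ ∑ k ∈ Finset.range (M + 1), w k * (K * |(k : ℝ) / M - t|) := by
        refine (norm_sum_le _ _).trans (Finset.sum_le_sum fun k hk => ?_)
        rw [norm_smul, Real.norm_of_nonneg (hw0 k), ← dist_eq_norm, ← Real.dist_eq]
        exact mul_le_mul_of_nonneg_left (hf.dist_le_mul _ (hnode k hk) _ ht) (hw0 k)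
    _ = K * ∑ k ∈ Finset.range (M + 1), w k * |(k : ℝ) / M - t| := by
        rw [Finset.mul_sum]
        exact Finset.sum_congr rfl fun k _ => by ring
    _ ≤ K * (1 / (2 * √M)) := by gcongr
    _ = K / (2 * √M) := by ring

theorem bernsteinPolynomial.natDegree_le (R : Type*) [CommRing R] (n ν : ℕ) :
    (bernsteinPolynomial R n ν).natDegree ≤ n := by
  rcases lt_or_ge n ν with h | h
  · simp [bernsteinPolynomial.eq_zero_of_lt R h]
  · unfold bernsteinPolynomial
    compute_degree
    omega

theorem exists_natDegree_le_eval_eq_bernstein_sum (g : ℝ → ℂ) (M : ℕ) (α β : ℝ) :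
    ∃ T : ℂ[X], T.natDegree ≤ M ∧ ∀ x : ℝ, T.eval (x : ℂ) =
      ∑ k ∈ Finset.range (M + 1), (bernsteinPolynomial ℝ M k).eval (α * x + β) • g (k / M) := by
  set P : ℕ → ℝ[X] := fun k =>
    (bernsteinPolynomial ℝ M k).comp (Polynomial.C α * Polynomial.X + Polynomial.C β)
  refine ⟨∑ k ∈ Finset.range (M + 1), (P k).map Complex.ofRealHom * Polynomial.C (g (k / M)),
    Polynomial.natDegree_sum_le_of_forall_le _ _ fun k _ => ?_, fun x => ?_⟩
  · refine (Polynomial.natDegree_mul_C_le _ _).trans ((Polynomial.natDegree_map_le).trans ?_)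
    refine Polynomial.natDegree_comp_le.trans ?_
    calc _ ≤ M * 1 := by
          gcongr
          · exact bernsteinPolynomial.natDegree_le ℝ M k
          · compute_degree
      _ = M := mul_one M
  · simp only [Polynomial.eval_finsetSum, Polynomial.eval_mul, Polynomial.eval_C,
      Polynomial.eval_map]
    refine Finset.sum_congr rfl fun k _ => ?_
    rw [← Complex.ofRealHom_eq_coe, Polynomial.eval₂_at_apply, Complex.ofRealHom_eq_coe,
      Complex.real_smul]
    simp [P]

theorem exists_affine_mem_Icc_lineMap_eq {a b : ℝ} (hab : a ≤ b) :
    ∃ α β : ℝ, ∀ x ∈ Icc a b, α * x + β ∈ Icc 0 1 ∧ AffineMap.lineMap a b (α * x + β) = x := by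
  rcases hab.eq_or_lt with rfl | hlt
  · exact ⟨0, 0, fun x hx => ⟨by simp, by simp [le_antisymm hx.2 hx.1]⟩⟩
  refine ⟨1 / (b - a), -a / (b - a), fun x hx => ?_⟩
  have hba : 0 < b - a := sub_pos.2 hlt
  have ht : 1 / (b - a) * x + -a / (b - a) = (x - a) / (b - a) := by ring
  rw [ht, AffineMap.lineMap_apply_ring']
  refine ⟨⟨div_nonneg (by linarith [hx.1]) hba.le, (div_le_one hba).2 (by linarith [hx.2])⟩, ?_⟩
  field_simp
  ring

theorem sum_abs_im_le_two_mul_sum_pi_sub_ang (s : Multiset ℂ) (hs : ∀ ξ ∈ s, ‖ξ‖ ≤ 1) {a b : ℝ}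
    (ha : |a| ≤ 1) (hb : |b| ≤ 1) :
    (s.map fun ξ : ℂ => |ξ.im|).sum ≤ 2 * (s.map fun ξ => Real.pi - ang ξ a b).sum := by
  rw [← Multiset.sum_map_mul_left]
  refine Multiset.sum_map_le_sum_map _ _ fun ξ hξ => ?_
  linarith [ang_le_pi_sub_abs_im_div_two (hs ξ hξ) ha hb]

theorem exists_nat_div_two_mul_sqrt_lt (K : ℝ) {ε : ℝ} (hε : 0 < ε) :
    ∃ M : ℕ, 0 < M ∧ K / (2 * √M) < ε := by
  obtain ⟨M, hM⟩ := exists_nat_gt ((K / ε) ^ 2)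
  have hM0 : (0 : ℝ) < M := (sq_nonneg _).trans_lt hM
  refine ⟨M, by exact_mod_cast hM0, ?_⟩
  have hK : K / ε < √M :=
    (le_abs_self _).trans_lt (Real.lt_sqrt (abs_nonneg _) |>.2 (by rwa [sq_abs]))
  rw [div_lt_iff₀ hε] at hK
  rw [div_lt_iff₀ (by positivity)]
  nlinarith [Real.sqrt_pos.2 hM0]

theorem lipschitzOnWith_phase_recipPoly_of_sum_pi_sub_ang_le (q : ℂ[X])
    (hroots : ∀ ξ ∈ q.roots, ‖ξ‖ ≤ 1) {a b C : ℝ} (ha : 0 < a) (hab : a ≤ b) (hb : b < 1)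
    (hang : (q.roots.map fun ξ => Real.pi - ang ξ a b).sum ≤ C) :
    LipschitzOnWith (2 * (2 * C) / (1 - b) ^ 2).toNNReal (fun x : ℝ => phase (recipPoly q x))
      (Icc a b) := by
  have habs : ∀ {c : ℝ}, c ∈ Icc a b → |c| ≤ 1 := fun hc =>
    abs_le.2 ⟨by linarith [hc.1], by linarith [hc.2]⟩
  have him := sum_abs_im_le_two_mul_sum_pi_sub_ang _ hroots (habs (left_mem_Icc.2 hab))
    (habs (right_mem_Icc.2 hab))
  refine ((lipschitzOnWith_phase_recipPoly q hroots hb).mono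
    fun x hx => ⟨ha.trans_le hx.1, hx.2⟩).weaken (Real.toNNReal_le_toNNReal ?_)
  gcongr
  linarith

theorem LipschitzOnWith.comp_lineMap {E : Type*} [PseudoMetricSpace E] {K : ℝ≥0} {f : ℝ → E}
    {a b : ℝ} (hf : LipschitzOnWith K f (Icc a b)) (hab : a ≤ b) :
    LipschitzOnWith (K * nndist a b) (f ∘ (AffineMap.lineMap a b : ℝ → ℝ)) (Icc 0 1) :=
  hf.comp (lipschitzWith_lineMap a b).lipschitzOnWith fun _ ht =>
    segment_eq_Icc hab ▸ lineMap_mem_segment ℝ a b ht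

theorem stmt5_general (a b : ℝ) (ha : 0 < a) (hab : a ≤ b) (hb : b < 1)
    (q : ℕ → Polynomial ℂ)
    (hroots : ∀ n, ∀ ξ ∈ (q n).roots, ‖ξ‖ < 1)
    (C : ℝ)
    (hang : ∀ n, ((q n).roots.map (fun ξ => Real.pi - ang ξ a b)).sum ≤ C) :
    ∀ ε > 0, ∃ l : ℕ, ∃ N : ℕ, ∀ n ≥ N, ∃ T : Polynomial ℂ, T.natDegree ≤ l ∧
      ∀ x ∈ Icc a b,
        ‖recipPoly (q n) (x : ℂ) / (‖recipPoly (q n) (x : ℂ)‖ : ℂ)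
          - Polynomial.eval (x : ℂ) T‖ < ε := by
  intro ε hε
  set K := (2 * (2 * C) / (1 - b) ^ 2).toNNReal
  have hnd : nndist a b ≤ 1 := by
    rw [← NNReal.coe_le_coe, coe_nndist, NNReal.coe_one, Real.dist_eq]
    exact abs_sub_le_iff.2 ⟨by linarith, by linarith⟩
  obtain ⟨M, hM, hMε⟩ := exists_nat_div_two_mul_sqrt_lt K hε
  obtain ⟨α, β, hαβ⟩ := exists_affine_mem_Icc_lineMap_eq hab
  refine ⟨M, 0, fun n _ => ?_⟩
  have hlip := lipschitzOnWith_phase_recipPoly_of_sum_pi_sub_ang_le (q n)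
    (fun ξ hξ => (hroots n ξ hξ).le) ha hab hb (hang n)
  set g : ℝ → ℂ := fun t => phase (recipPoly (q n) (AffineMap.lineMap a b t : ℝ))
  have hg : LipschitzOnWith K g (Icc 0 1) :=
    (hlip.comp_lineMap hab).weaken (mul_le_of_le_one_right' hnd)
  obtain ⟨T, hTdeg, hT⟩ := exists_natDegree_le_eval_eq_bernstein_sum g M α β
  refine ⟨T, hTdeg, fun x hx => ?_⟩
  obtain ⟨ht, hx'⟩ := hαβ x hx
  have hbern := hg.norm_bernstein_sum_sub_le hM ht
  rw [← hT, show g (α * x + β) = phase (recipPoly (q n) x) by simp only [g, hx'],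
    norm_sub_rev] at hbern
  exact hbern.trans_lt hMε

/-- if the zeros `ξ_{j,n}` of `q_n` lie in the open unit disk and satisfy
`∑_j (π - ∠(ξ_{j,n}, I)) ≤ C` with `I = [a,b] ⊂ (0,1)`, then for every `ε > 0` there is an
integer `l` such that for all large `n` there exists a polynomial `T` of degree at most `l`
approximating `q̃_n/|q̃_n|` within `ε` uniformly on `I`. -/
theorem stmt5 (a b : ℝ) (ha : 0 < a) (hab : a ≤ b) (hb : b < 1)
    (q : ℕ → Polynomial ℂ) (hq0 : ∀ n, q n ≠ 0)
    (hroots : ∀ n, ∀ ξ ∈ (q n).roots, ‖ξ‖ < 1)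
    (C : ℝ)
    (hang : ∀ n, ((q n).roots.map (fun ξ => Real.pi - ang ξ a b)).sum ≤ C) :
    ∀ ε > 0, ∃ l : ℕ, ∃ N : ℕ, ∀ n ≥ N, ∃ T : Polynomial ℂ, T.natDegree ≤ l ∧
      ∀ x ∈ Icc a b,
        ‖recipPoly (q n) (x : ℂ) / (‖recipPoly (q n) (x : ℂ)‖ : ℂ)
          - Polynomial.eval (x : ℂ) T‖ < ε :=
  stmt5_general a b ha hab hb q hroots C hang
end
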